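/- arXiv:2604.00497 — 2 statements merged into one kernel-verified Lean document; each statement's English description precedes it below -/
import Mathlib

section
/- Let ε, δ > 0 and k ≥ 0, and let f(x,y,t,τ) := Γ_{N-1}(x'-y', (t-τ)/ε + (k/δ)τ) · (ε(x_N+y_N+τ/δ)/(t-τ)) Γ_1(x_N+y_N+τ/δ, (t-τ)/ε). Then for every fixed y ∈ Ω̄ and τ ∈ (0,t), f satisfies ε ∂_t f - Δ_x f = 0 at every (x,t) with x ∈ Ω and t > τ. -/
open MeasureTheory Real

/-- The d-dimensional Gaussian heat kernel Γ_d(x,t). -/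
noncomputable def heatKer (d : ℕ) (x : EuclideanSpace ℝ (Fin d)) (t : ℝ) : ℝ :=
  (4 * Real.pi * t) ^ (-(d : ℝ) / 2) * Real.exp (-‖x‖ ^ 2 / (4 * t))

/-- The one-dimensional Gaussian heat kernel Γ_1(ξ,t). -/
noncomputable def heatKer1 (ξ t : ℝ) : ℝ :=
  (4 * Real.pi * t) ^ (-(1 : ℝ) / 2) * Real.exp (-ξ ^ 2 / (4 * t))

/-- The integrand f(x,y,t,τ) of the kernel H, with N - 1 = d:
f = Γ_{N-1}(x'-y',(t-τ)/ε+(k/δ)τ) · (ε(x_N+y_N+τ/δ)/(t-τ)) Γ_1(x_N+y_N+τ/δ,(t-τ)/ε). -/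
noncomputable def fInt (ε δ k : ℝ) (d : ℕ) (x' : EuclideanSpace ℝ (Fin d)) (xN : ℝ)
    (y' : EuclideanSpace ℝ (Fin d)) (yN t τ : ℝ) : ℝ :=
  heatKer d (x' - y') ((t - τ) / ε + (k / δ) * τ) *
    (ε * (xN + yN + τ / δ) / (t - τ)) * heatKer1 (xN + yN + τ / δ) ((t - τ) / ε)

section aux

lemma sd_quad (C S q a : ℝ) (hS : S ≠ 0) :
    iteratedDeriv 2 (fun s : ℝ => C * Real.exp (-(q + 2*a*s + s^2)/(4*S))) 0
      = C * Real.exp (-q/(4*S)) * (a^2/(4*S^2) - 1/(2*S)) := by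
  have hin : ∀ s : ℝ, HasDerivAt (fun s : ℝ => -(q + 2*a*s + s^2)/(4*S))
      (-(2*a + 2*s)/(4*S)) s := by
    intro s
    have h : HasDerivAt (fun s : ℝ => q + 2*a*s + s^2) (2*a + 2*s) s := by
      have h1 : HasDerivAt (fun s : ℝ => q + 2*a*s) (2*a) s := by
        simpa using ((hasDerivAt_id s).const_mul (2*a)).const_add q
      exact (h1.add (hasDerivAt_pow 2 s)).congr_deriv (by norm_num)
    exact h.neg.div_const (4*S)
  have hd1 : ∀ s : ℝ, HasDerivAt (fun s : ℝ => C * Real.exp (-(q + 2*a*s + s^2)/(4*S)))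
      (C * Real.exp (-(q + 2*a*s + s^2)/(4*S)) * (-(2*a + 2*s)/(4*S))) s := by
    intro s
    simpa [mul_assoc] using ((hin s).exp.const_mul C)
  have hD : deriv (fun s : ℝ => C * Real.exp (-(q + 2*a*s + s^2)/(4*S)))
      = fun s => C * Real.exp (-(q + 2*a*s + s^2)/(4*S)) * (-(2*a + 2*s)/(4*S)) :=
    funext fun s => (hd1 s).deriv
  rw [iteratedDeriv_succ, iteratedDeriv_one, hD]
  have hd2 : HasDerivAt (fun s : ℝ => C * Real.exp (-(q + 2*a*s + s^2)/(4*S)) * (-(2*a + 2*s)/(4*S)))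
      (C * Real.exp (-(q + 2*a*0 + 0^2)/(4*S)) * (-(2*a + 2*0)/(4*S)) * (-(2*a + 2*0)/(4*S))
        + C * Real.exp (-(q + 2*a*0 + 0^2)/(4*S)) * (-2/(4*S))) 0 := by
    have hlin : HasDerivAt (fun s : ℝ => -(2*a + 2*s)/(4*S)) (-2/(4*S)) 0 := by
      have : HasDerivAt (fun s : ℝ => 2*a + 2*s) 2 0 := by
        simpa using ((hasDerivAt_id (0:ℝ)).const_mul 2).const_add (2*a)
      exact this.neg.div_const (4*S)
    exact (hd1 0).mul hlin
  rw [hd2.deriv]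
  field_simp
  ring

lemma sd_lin (C U ξ : ℝ) (hU : U ≠ 0) :
    iteratedDeriv 2 (fun s : ℝ => C * (ξ + s) * Real.exp (-(ξ + s)^2/(4*U))) 0
      = C * ξ * Real.exp (-ξ^2/(4*U)) * (ξ^2/(4*U^2) - 3/(2*U)) := by
  have hexp : ∀ s : ℝ, HasDerivAt (fun s : ℝ => Real.exp (-(ξ + s)^2/(4*U)))
      (Real.exp (-(ξ + s)^2/(4*U)) * (-(2*(ξ + s))/(4*U))) s := by
    intro s
    have h0 : HasDerivAt (fun s : ℝ => (ξ + s)^2) (2*(ξ + s)) s := by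
      exact (((hasDerivAt_id s).const_add ξ).pow 2).congr_deriv (by simp)
    exact (h0.neg.div_const (4*U)).exp
  have hd1 : ∀ s : ℝ, HasDerivAt (fun s : ℝ => C * (ξ + s) * Real.exp (-(ξ + s)^2/(4*U)))
      (C * Real.exp (-(ξ + s)^2/(4*U)) * (1 - (ξ + s)^2/(2*U))) s := by
    intro s
    have h1 : HasDerivAt (fun s : ℝ => C * (ξ + s)) C s := by
      simpa using ((hasDerivAt_id s).const_add ξ).const_mul C
    have := h1.mul (hexp s)
    refine this.congr_deriv ?_
    beta_reduce
    field_simp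
    ring
  have hD : deriv (fun s : ℝ => C * (ξ + s) * Real.exp (-(ξ + s)^2/(4*U)))
      = fun s => C * Real.exp (-(ξ + s)^2/(4*U)) * (1 - (ξ + s)^2/(2*U)) :=
    funext fun s => (hd1 s).deriv
  rw [iteratedDeriv_succ, iteratedDeriv_one, hD]
  have h2 : HasDerivAt (fun s : ℝ => C * Real.exp (-(ξ + s)^2/(4*U)) * (1 - (ξ + s)^2/(2*U)))
      ((C * (Real.exp (-(ξ + 0)^2/(4*U)) * (-(2*(ξ + 0))/(4*U)))) * (1 - (ξ + 0)^2/(2*U))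
        + C * Real.exp (-(ξ + 0)^2/(4*U)) * (-(2*(ξ + 0))/(2*U))) 0 := by
    have h0 : HasDerivAt (fun s : ℝ => (ξ + s)^2) (2*(ξ + 0)) 0 := by
      exact (((hasDerivAt_id (0:ℝ)).const_add ξ).pow 2).congr_deriv (by simp)
    have hq : HasDerivAt (fun s : ℝ => 1 - (ξ + s)^2/(2*U)) (-(2*(ξ + 0))/(2*U)) 0 := by
      exact ((h0.div_const (2*U)).const_sub 1).congr_deriv (by ring)
    exact (((hexp 0).const_mul C).mul hq)
  rw [h2.deriv]
  field_simp
  ring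

lemma hasDerivAt_time (p q ξ ε c τ t : ℝ) (hε : 0 < ε) (ht : τ < t) (hc : 0 ≤ c) :
    HasDerivAt (fun s : ℝ =>
        (4*Real.pi*((s-τ)/ε + c))^p * Real.exp (-q/(4*((s-τ)/ε + c))) * (ε*ξ/(s-τ)) *
          ((4*Real.pi*((s-τ)/ε))^(-(1:ℝ)/2) * Real.exp (-ξ^2/(4*((s-τ)/ε)))))
      ((4*Real.pi*((t-τ)/ε + c))^p * Real.exp (-q/(4*((t-τ)/ε + c))) * (ε*ξ/(t-τ)) *
        ((4*Real.pi*((t-τ)/ε))^(-(1:ℝ)/2) * Real.exp (-ξ^2/(4*((t-τ)/ε)))) *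
        ((1/ε) * (p/((t-τ)/ε + c) + q/(4*((t-τ)/ε + c)^2)
          - ε/(t-τ) - 1/(2*((t-τ)/ε)) + ξ^2/(4*((t-τ)/ε)^2)))) t := by
  have htτ : (0:ℝ) < t - τ := by linarith
  have hU : 0 < (t-τ)/ε := div_pos htτ hε
  have hS : 0 < (t-τ)/ε + c := by linarith
  have hpi : 0 < Real.pi := Real.pi_pos
  have h4S : (0:ℝ) < 4*Real.pi*((t-τ)/ε + c) := by positivity
  have h4U : (0:ℝ) < 4*Real.pi*((t-τ)/ε) := by positivity
  have hS' : HasDerivAt (fun s : ℝ => (s-τ)/ε + c) (1/ε) t := by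
    simpa using (((hasDerivAt_id t).sub_const τ).div_const ε).add_const c
  have hU' : HasDerivAt (fun s : ℝ => (s-τ)/ε) (1/ε) t := by
    simpa using ((hasDerivAt_id t).sub_const τ).div_const ε
  have hA1 : HasDerivAt (fun s : ℝ => (4*Real.pi*((s-τ)/ε + c))^p)
      ((4*Real.pi*(1/ε)) * p * (4*Real.pi*((t-τ)/ε + c))^(p-1)) t :=
    (hS'.const_mul (4*Real.pi)).rpow_const (Or.inl h4S.ne')
  have hA2 : HasDerivAt (fun s : ℝ => Real.exp (-q/(4*((s-τ)/ε + c))))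
      (Real.exp (-q/(4*((t-τ)/ε + c))) *
        ((0*(4*((t-τ)/ε + c)) - (-q)*(4*(1/ε)))/(4*((t-τ)/ε + c))^2)) t := by
    have hden : HasDerivAt (fun s : ℝ => 4*((s-τ)/ε + c)) (4*(1/ε)) t := hS'.const_mul 4
    exact (((hasDerivAt_const t (-q)).div hden (by positivity)).exp)
  have hF3 : HasDerivAt (fun s : ℝ => ε*ξ/(s-τ))
      ((0*(t-τ) - ε*ξ*1)/(t-τ)^2) t :=
    (hasDerivAt_const t (ε*ξ)).div ((hasDerivAt_id t).sub_const τ) htτ.ne'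
  have hB1 : HasDerivAt (fun s : ℝ => (4*Real.pi*((s-τ)/ε))^(-(1:ℝ)/2))
      ((4*Real.pi*(1/ε)) * (-(1:ℝ)/2) * (4*Real.pi*((t-τ)/ε))^(-(1:ℝ)/2-1)) t :=
    (hU'.const_mul (4*Real.pi)).rpow_const (Or.inl h4U.ne')
  have hB2 : HasDerivAt (fun s : ℝ => Real.exp (-ξ^2/(4*((s-τ)/ε))))
      (Real.exp (-ξ^2/(4*((t-τ)/ε))) *
        ((0*(4*((t-τ)/ε)) - (-ξ^2)*(4*(1/ε)))/(4*((t-τ)/ε))^2)) t := by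
    have hden : HasDerivAt (fun s : ℝ => 4*((s-τ)/ε)) (4*(1/ε)) t := hU'.const_mul 4
    exact (((hasDerivAt_const t (-ξ^2)).div hden (by positivity)).exp)
  have h := ((hA1.mul hA2).mul hF3).mul (hB1.mul hB2)
  refine h.congr_deriv ?_
  simp only [Pi.mul_apply]
  rw [Real.rpow_sub_one h4S.ne', Real.rpow_sub_one h4U.ne']
  field_simp
  ring

end aux

/-- For fixed y and τ, f satisfies ε ∂_t f - Δ_x f = 0 for x ∈ Ω and t > τ, where
the Laplacian Δ_x on ℝ^N = ℝ^{N-1} × ℝ is expressed as the sum of the second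
derivatives along the coordinate directions of x' and along x_N. -/
theorem fInt_heat_equation (ε δ k : ℝ) (hε : 0 < ε) (hδ : 0 < δ) (hk : 0 ≤ k)
    (d : ℕ) (hd : 1 ≤ d) (y' : EuclideanSpace ℝ (Fin d)) (yN τ : ℝ)
    (hyN : 0 ≤ yN) (hτ : 0 < τ) :
    ∀ (x' : EuclideanSpace ℝ (Fin d)) (xN t : ℝ), 0 < xN → τ < t →
      ε * deriv (fun s : ℝ => fInt ε δ k d x' xN y' yN s τ) t -
        ((∑ i : Fin d, iteratedDeriv 2
            (fun s : ℝ => fInt ε δ k d (x' + s • EuclideanSpace.single i (1 : ℝ)) xN y' yN t τ) 0)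
          + iteratedDeriv 2 (fun s : ℝ => fInt ε δ k d x' (xN + s) y' yN t τ) 0) = 0 := by
  intro x' xN t hxN ht
  have htτ : (0:ℝ) < t - τ := by linarith
  have hc : (0:ℝ) ≤ k / δ * τ := by positivity
  have hU : 0 < (t-τ)/ε := div_pos htτ hε
  have hS : 0 < (t-τ)/ε + k / δ * τ := by linarith
  have hpi : 0 < Real.pi := Real.pi_pos
  set q : ℝ := ‖x' - y'‖^2 with hq
  set ξ : ℝ := xN + yN + τ / δ with hξ
  -- time derivative
  have hT := hasDerivAt_time (-(d:ℝ)/2) q ξ ε (k / δ * τ) τ t hε ht hc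
  have hfeq : (fun s : ℝ => fInt ε δ k d x' xN y' yN s τ)
      = (fun s : ℝ =>
        (4*Real.pi*((s-τ)/ε + k / δ * τ))^(-(d:ℝ)/2) * Real.exp (-q/(4*((s-τ)/ε + k / δ * τ)))
          * (ε*ξ/(s-τ)) *
          ((4*Real.pi*((s-τ)/ε))^(-(1:ℝ)/2) * Real.exp (-ξ^2/(4*((s-τ)/ε))))) := by
    funext s
    simp only [fInt, heatKer, heatKer1, hq, hξ]
  rw [hfeq, hT.deriv]
  -- x' second derivatives
  have hnormsum : ∑ i : Fin d, ((x' - y') i)^2 = q := by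
    rw [hq, EuclideanSpace.norm_eq]
    rw [Real.sq_sqrt (by positivity)]
    simp [sq_abs]
  have hxlap : ∀ i : Fin d,
      iteratedDeriv 2
        (fun s : ℝ => fInt ε δ k d (x' + s • EuclideanSpace.single i (1 : ℝ)) xN y' yN t τ) 0
      = ((4*Real.pi*((t-τ)/ε + k / δ * τ))^(-(d:ℝ)/2) * (ε*ξ/(t-τ)) *
          ((4*Real.pi*((t-τ)/ε))^(-(1:ℝ)/2) * Real.exp (-ξ^2/(4*((t-τ)/ε)))))
          * Real.exp (-q/(4*((t-τ)/ε + k / δ * τ)))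
          * (((x' - y') i)^2/(4*((t-τ)/ε + k / δ * τ)^2) - 1/(2*((t-τ)/ε + k / δ * τ))) := by
    intro i
    have hnorm : ∀ s : ℝ, ‖x' + s • EuclideanSpace.single i (1:ℝ) - y'‖^2
        = q + 2*((x' - y') i)*s + s^2 := by
      intro s
      have hv : x' + s • EuclideanSpace.single i (1:ℝ) - y'
          = (x' - y') + s • EuclideanSpace.single i (1:ℝ) := by abel
      rw [hv, norm_add_sq_real, real_inner_smul_right]
      have h1 : (inner ℝ (x' - y') (EuclideanSpace.single i (1:ℝ)) : ℝ) = (x' - y') i := by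
        simp [EuclideanSpace.inner_single_right]
      rw [h1, norm_smul]
      simp only [EuclideanSpace.norm_single, norm_one, Real.norm_eq_abs, mul_one, sq_abs, hq]
      ring
    have hfun : (fun s : ℝ => fInt ε δ k d (x' + s • EuclideanSpace.single i (1 : ℝ)) xN y' yN t τ)
        = fun s : ℝ => ((4*Real.pi*((t-τ)/ε + k / δ * τ))^(-(d:ℝ)/2) * (ε*ξ/(t-τ)) *
            ((4*Real.pi*((t-τ)/ε))^(-(1:ℝ)/2) * Real.exp (-ξ^2/(4*((t-τ)/ε)))))
            * Real.exp (-(q + 2*((x' - y') i)*s + s^2)/(4*((t-τ)/ε + k / δ * τ))) := by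
      funext s
      simp only [fInt, heatKer, heatKer1, hξ]
      rw [hnorm s]
      ring
    rw [hfun, sd_quad _ _ _ _ hS.ne']
  -- xN second derivative
  have hNlap :
      iteratedDeriv 2 (fun s : ℝ => fInt ε δ k d x' (xN + s) y' yN t τ) 0
      = ((4*Real.pi*((t-τ)/ε + k / δ * τ))^(-(d:ℝ)/2) * Real.exp (-q/(4*((t-τ)/ε + k / δ * τ)))
          * (ε/(t-τ)) * (4*Real.pi*((t-τ)/ε))^(-(1:ℝ)/2))
          * ξ * Real.exp (-ξ^2/(4*((t-τ)/ε)))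
          * (ξ^2/(4*((t-τ)/ε)^2) - 3/(2*((t-τ)/ε))) := by
    have hfun : (fun s : ℝ => fInt ε δ k d x' (xN + s) y' yN t τ)
        = fun s : ℝ => ((4*Real.pi*((t-τ)/ε + k / δ * τ))^(-(d:ℝ)/2)
            * Real.exp (-q/(4*((t-τ)/ε + k / δ * τ)))
            * (ε/(t-τ)) * (4*Real.pi*((t-τ)/ε))^(-(1:ℝ)/2))
            * (ξ + s) * Real.exp (-(ξ + s)^2/(4*((t-τ)/ε))) := by
      funext s
      simp only [fInt, heatKer, heatKer1, hq, hξ]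
      rw [show xN + s + yN + τ / δ = xN + yN + τ / δ + s by ring]
      ring
    rw [hfun, sd_lin _ _ _ hU.ne']
  rw [hNlap, Finset.sum_congr rfl (fun i _ => hxlap i)]
  have e1 : ε * ξ / (t - τ) = ξ / ((t-τ)/ε) := by
    rw [div_div_eq_mul_div, mul_comm ξ ε]
  have e2 : ε / (t - τ) = 1 / ((t-τ)/ε) := by rw [one_div_div]
  rw [e1, e2]
  set u := (t-τ)/ε with hu'
  set c := k / δ * τ with hc'
  have hu0 : u ≠ 0 := hU.ne'
  have hS0 : u + c ≠ 0 := hS.ne'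
  have hεne : ε ≠ 0 := hε.ne'
  set W := (4*Real.pi*(u + c))^(-(d:ℝ)/2) with hW
  set V := (4*Real.pi*u)^(-(1:ℝ)/2) with hV
  set EA := Real.exp (-q/(4*(u + c))) with hEA
  set EB := Real.exp (-ξ^2/(4*u)) with hEB
  clear_value W V EA EB
  have hsum2 : (∑ i : Fin d,
      (W * (ξ/u) * (V * EB)) * EA
          * (((x' - y') i)^2/(4*(u + c)^2) - 1/(2*(u + c))))
      = (W * (ξ/u) * (V * EB)) * EA
          * (q/(4*(u + c)^2) - (d:ℝ)/(2*(u + c))) := by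
    rw [show (∑ i : Fin d,
        (W * (ξ/u) * (V * EB)) * EA
            * (((x' - y') i)^2/(4*(u + c)^2) - 1/(2*(u + c))))
        = ∑ i : Fin d,
          ((W * (ξ/u) * (V * EB)) * EA / (4*(u + c)^2) * ((x' - y') i)^2
          - (W * (ξ/u) * (V * EB)) * EA * (1/(2*(u + c))))
        from Finset.sum_congr rfl (fun i _ => by ring)]
    rw [Finset.sum_sub_distrib, ← Finset.mul_sum, hnormsum, Finset.sum_const,
      Finset.card_univ, Fintype.card_fin, nsmul_eq_mul]
    ring
  rw [hsum2]
  clear_value q ξ u c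
  field_simp
  ring
end

section
/- Let δ > 0 and k > 0, and let K^{δ,k} be the kernel K^{δ,k}(x,y,t) = -2∫_0^∞ Γ_{N-1}(x'-y', (k/δ)t + τ) ∂_{x_N}Γ_1(x_N + y_N + t/δ, τ) dτ defined for x ∈ Ω̄, y ∈ ∂Ω, t > 0. Then K^{δ,k} satisfies the convolution identity K^{δ,k}(x,y,t) = ∫_{ℝ^{N-1}} Γ_{N-1}(x'-z', (k/δ)t) P(z'-y', x_N + t/δ) dz', where P is the half-space Poisson kernel. -/
open MeasureTheory Real

/-- ∂_ξ Γ_1(ξ,s) = -(ξ/(2s)) Γ_1(ξ,s). -/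
noncomputable def dHeatKer1 (ξ t : ℝ) : ℝ := -(ξ / (2 * t)) * heatKer1 ξ t

/-- The half-space Poisson kernel P(x', x_N) = π^{-N/2} Γ(N/2) x_N (|x'|²+x_N²)^{-N/2},
with N = d + 1. -/
noncomputable def poissonKer (d : ℕ) (x' : EuclideanSpace ℝ (Fin d)) (xN : ℝ) : ℝ :=
  Real.pi ^ (-((d : ℝ) + 1) / 2) * Real.Gamma (((d : ℝ) + 1) / 2) * xN *
    (‖x'‖ ^ 2 + xN ^ 2) ^ (-((d : ℝ) + 1) / 2)

/-- The kernel K^{δ,k}(x,y,t), y = (y',0) ∈ ∂Ω, N = d + 1. -/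
noncomputable def Kdk (δ k : ℝ) (d : ℕ) (x' : EuclideanSpace ℝ (Fin d)) (xN : ℝ)
    (y' : EuclideanSpace ℝ (Fin d)) (t : ℝ) : ℝ :=
  -2 * ∫ τ in Set.Ioi (0 : ℝ),
    heatKer d (x' - y') ((k / δ) * t + τ) * dHeatKer1 (xN + t / δ) τ

open Set

section Aux

variable {d : ℕ}

lemma heat_prod_eq {s τ : ℝ} (hs : 0 < s) (hτ : 0 < τ) (x y z : EuclideanSpace ℝ (Fin d)) :
    heatKer d (x - z) s * heatKer d (z - y) τ
      = ((4 * π * s) ^ (-(d : ℝ) / 2) * (4 * π * τ) ^ (-(d : ℝ) / 2) *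
          rexp (-‖x - y‖ ^ 2 / (4 * (s + τ)))) *
        rexp (-((s + τ) / (4 * s * τ)) *
          ‖z - ((τ / (s + τ)) • x + (s / (s + τ)) • y)‖ ^ 2) := by
  have hst : (0:ℝ) < s + τ := by linarith
  unfold heatKer
  have hexp : -‖x - z‖ ^ 2 / (4 * s) + -‖z - y‖ ^ 2 / (4 * τ)
      = -‖x - y‖ ^ 2 / (4 * (s + τ)) + -((s + τ) / (4 * s * τ)) *
          ‖z - ((τ / (s + τ)) • x + (s / (s + τ)) • y)‖ ^ 2 := by
    have expand : ∀ u v : EuclideanSpace ℝ (Fin d),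
        ‖u - v‖ ^ 2 = ‖u‖ ^ 2 - 2 * inner ℝ u v + ‖v‖ ^ 2 := fun u v =>
      norm_sub_sq_real u v
    have hsm : ∀ (c : ℝ) (u : EuclideanSpace ℝ (Fin d)), ‖c • u‖ ^ 2 = c ^ 2 * ‖u‖ ^ 2 := by
      intro c u
      rw [norm_smul, mul_pow, Real.norm_eq_abs, sq_abs]
    have hm : ‖z - ((τ / (s + τ)) • x + (s / (s + τ)) • y)‖ ^ 2
        = ‖z‖ ^ 2 - 2 * ((τ / (s + τ)) * inner ℝ z x + (s / (s + τ)) * inner ℝ z y)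
          + ((τ / (s + τ)) ^ 2 * ‖x‖ ^ 2
            + 2 * ((τ / (s + τ)) * ((s / (s + τ)) * inner ℝ x y))
            + (s / (s + τ)) ^ 2 * ‖y‖ ^ 2) := by
      rw [expand, inner_add_right, real_inner_smul_right, real_inner_smul_right,
        norm_add_sq_real, hsm, hsm, real_inner_smul_left, real_inner_smul_right]
    rw [expand x z, expand z y, expand x y, hm, real_inner_comm z x]
    field_simp
    ring
  rw [mul_mul_mul_comm, ← Real.exp_add, hexp, Real.exp_add]
  ring

lemma gauss_integrable (d : ℕ) {b : ℝ} (hb : 0 < b) :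
    Integrable (fun v : EuclideanSpace ℝ (Fin d) => rexp (-b * ‖v‖ ^ 2)) := by
  have h := (GaussianFourier.integrable_cexp_neg_mul_sq_norm_add
    (b := (b : ℂ)) (by simpa using hb) 0 (0 : EuclideanSpace ℝ (Fin d))).norm
  refine h.congr (Filter.Eventually.of_forall fun v => ?_)
  simp [Complex.norm_exp, ← Complex.ofReal_pow]

lemma gauss_integral (d : ℕ) {b : ℝ} (hb : 0 < b) :
    ∫ v : EuclideanSpace ℝ (Fin d), rexp (-b * ‖v‖ ^ 2) = (π / b) ^ ((d : ℝ) / 2) := by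
  rw [GaussianFourier.integral_rexp_neg_mul_sq_norm hb]
  simp [finrank_euclideanSpace_fin]

lemma semigroup_integrable {s τ : ℝ} (hs : 0 < s) (hτ : 0 < τ)
    (x y : EuclideanSpace ℝ (Fin d)) :
    Integrable (fun z : EuclideanSpace ℝ (Fin d) =>
      heatKer d (x - z) s * heatKer d (z - y) τ) := by
  have hb : (0:ℝ) < (s + τ) / (4 * s * τ) := by positivity
  have hI := (((gauss_integrable d hb).comp_sub_right
    ((τ / (s + τ)) • x + (s / (s + τ)) • y)).const_mul
    ((4 * π * s) ^ (-(d : ℝ) / 2) * (4 * π * τ) ^ (-(d : ℝ) / 2) *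
      rexp (-‖x - y‖ ^ 2 / (4 * (s + τ)))))
  exact hI.congr (Filter.Eventually.of_forall fun z => (heat_prod_eq hs hτ x y z).symm)

lemma semigroup_integral {s τ : ℝ} (hs : 0 < s) (hτ : 0 < τ)
    (x y : EuclideanSpace ℝ (Fin d)) :
    ∫ z : EuclideanSpace ℝ (Fin d), heatKer d (x - z) s * heatKer d (z - y) τ
      = heatKer d (x - y) (s + τ) := by
  have hst : (0:ℝ) < s + τ := by linarith
  have hb : (0:ℝ) < (s + τ) / (4 * s * τ) := by positivity
  calc ∫ z : EuclideanSpace ℝ (Fin d), heatKer d (x - z) s * heatKer d (z - y) τ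
      = ∫ z : EuclideanSpace ℝ (Fin d),
          ((4 * π * s) ^ (-(d : ℝ) / 2) * (4 * π * τ) ^ (-(d : ℝ) / 2) *
            rexp (-‖x - y‖ ^ 2 / (4 * (s + τ)))) *
          rexp (-((s + τ) / (4 * s * τ)) *
            ‖z - ((τ / (s + τ)) • x + (s / (s + τ)) • y)‖ ^ 2) := by
        exact integral_congr_ae (Filter.Eventually.of_forall fun z => heat_prod_eq hs hτ x y z)
    _ = ((4 * π * s) ^ (-(d : ℝ) / 2) * (4 * π * τ) ^ (-(d : ℝ) / 2) *
          rexp (-‖x - y‖ ^ 2 / (4 * (s + τ)))) *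
        ∫ z : EuclideanSpace ℝ (Fin d),
          rexp (-((s + τ) / (4 * s * τ)) * ‖z‖ ^ 2) := by
        rw [integral_const_mul]
        congr 1
        exact integral_sub_right_eq_self
          (fun z => rexp (-((s + τ) / (4 * s * τ)) * ‖z‖ ^ 2)) _
    _ = heatKer d (x - y) (s + τ) := by
        rw [gauss_integral d hb]
        unfold heatKer
        have hA : (0:ℝ) < 4*π*s := by positivity
        have hB : (0:ℝ) < 4*π*τ := by positivity
        have hZ : (0:ℝ) < 4*π*(s+τ) := by positivity
        have h1 : π / ((s + τ) / (4 * s * τ)) = 4*π*s * (4*π*τ) / (4*π*(s+τ)) := by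
          field_simp
        rw [h1, Real.div_rpow (by positivity) hZ.le, Real.mul_rpow hA.le hB.le, neg_div,
          Real.rpow_neg hA.le, Real.rpow_neg hB.le, Real.rpow_neg hZ.le]
        have h2 : ((4*π*s) ^ ((d:ℝ)/2)) ≠ 0 := by positivity
        have h3 : ((4*π*τ) ^ ((d:ℝ)/2)) ≠ 0 := by positivity
        have h4 : ((4*π*(s+τ)) ^ ((d:ℝ)/2)) ≠ 0 := by positivity
        field_simp

lemma inv_image_Ioi : (fun τ : ℝ => τ⁻¹) '' Ioi 0 = Ioi 0 := by
  ext u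
  constructor
  · rintro ⟨τ, hτ, rfl⟩; exact mem_Ioi.2 (inv_pos.2 (mem_Ioi.1 hτ))
  · intro hu; exact ⟨u⁻¹, mem_Ioi.2 (inv_pos.2 (mem_Ioi.1 hu)), inv_inv u⟩

lemma inv_deriv_smul {c m : ℝ} {τ : ℝ} (hτ : τ ∈ Ioi (0:ℝ)) :
    |(-(τ ^ 2)⁻¹)| • (τ⁻¹ ^ (m - 2) * rexp (-c * τ⁻¹))
      = τ ^ (-m) * rexp (-c / τ) := by
  have hτ0 : (0:ℝ) < τ := hτ
  rw [smul_eq_mul, abs_neg, abs_inv, abs_of_nonneg (by positivity : (0:ℝ) ≤ τ ^ 2)]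
  rw [← Real.rpow_natCast τ 2, ← Real.rpow_neg hτ0.le,
    Real.inv_rpow hτ0.le, ← Real.rpow_neg hτ0.le, ← mul_assoc,
    ← Real.rpow_add hτ0]
  have h2 : (-(2:ℕ):ℝ) + -(m - 2) = -m := by push_cast; ring
  rw [h2, neg_div, div_eq_mul_inv, neg_mul]

lemma dlem_key {c m : ℝ} (hc : 0 < c) (hm : 1 < m) :
    IntegrableOn (fun τ : ℝ => τ ^ (-m) * rexp (-c / τ)) (Ioi 0) ∧
    ∫ τ in Ioi (0:ℝ), τ ^ (-m) * rexp (-c / τ) = c ^ (-(m - 1)) * Real.Gamma (m - 1) := by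
  have hf' : ∀ τ ∈ Ioi (0:ℝ), HasDerivWithinAt (fun u : ℝ => u⁻¹) (-(τ ^ 2)⁻¹) (Ioi 0) τ :=
    fun τ hτ => (hasDerivAt_inv (ne_of_gt hτ)).hasDerivWithinAt
  have hinj : InjOn (fun τ : ℝ => τ⁻¹) (Ioi 0) := inv_injective.injOn
  have hg : IntegrableOn (fun u : ℝ => u ^ (m - 2) * rexp (-c * u)) (Ioi 0) := by
    refine (integrableOn_rpow_mul_exp_neg_mul_rpow (by linarith : (-1:ℝ) < m - 2)
      (by norm_num : (0:ℝ) < 1) hc).congr_fun (fun u hu => ?_) measurableSet_Ioi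
    simp only [Real.rpow_one]
  constructor
  · have := (integrableOn_image_iff_integrableOn_abs_deriv_smul measurableSet_Ioi hf' hinj
      (fun u : ℝ => u ^ (m - 2) * rexp (-c * u))).mp (by rwa [inv_image_Ioi])
    exact this.congr_fun (fun τ hτ => inv_deriv_smul hτ) measurableSet_Ioi
  · have him := integral_image_eq_integral_abs_deriv_smul measurableSet_Ioi hf' hinj
      (fun u : ℝ => u ^ (m - 2) * rexp (-c * u))
    rw [inv_image_Ioi] at him
    have hval : ∫ u in Ioi (0:ℝ), u ^ (m - 2) * rexp (-c * u)
        = c ^ (-(m - 1)) * Real.Gamma (m - 1) := by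
      have := integral_rpow_mul_exp_neg_mul_rpow (by norm_num : (0:ℝ) < 1)
        (by linarith : (-1:ℝ) < m - 2) hc
      rw [show (-(m - 2 + 1) / 1 : ℝ) = -(m - 1) by ring,
        show ((m - 2 + 1) / 1 : ℝ) = m - 1 by ring,
        mul_one_div, div_one] at this
      rw [← this]
      refine setIntegral_congr_fun measurableSet_Ioi (fun u hu => ?_)
      rw [Real.rpow_one]
    rw [← hval, him]
    exact setIntegral_congr_fun measurableSet_Ioi
      (fun τ hτ => (inv_deriv_smul (c := c) (m := m) hτ).symm)

lemma subord_pointwise {a : ℝ} (v : EuclideanSpace ℝ (Fin d)) {τ : ℝ} (hτ : τ ∈ Ioi (0:ℝ)) :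
    heatKer d v τ * (-2 * dHeatKer1 a τ)
      = (a * (4 * π) ^ (-(((d:ℝ) + 1) / 2))) *
        (τ ^ (-(((d:ℝ) + 3) / 2)) * rexp (-((‖v‖ ^ 2 + a ^ 2) / 4) / τ)) := by
  have hτ0 : (0:ℝ) < τ := hτ
  unfold heatKer dHeatKer1 heatKer1
  have e1 : rexp (-((‖v‖ ^ 2 + a ^ 2) / 4) / τ)
      = rexp (-‖v‖ ^ 2 / (4 * τ)) * rexp (-a ^ 2 / (4 * τ)) := by
    rw [← Real.exp_add]
    congr 1
    field_simp
    ring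
  have e2 : (4 * π * τ) ^ (-(d:ℝ) / 2) * (4 * π * τ) ^ (-(1:ℝ) / 2) * τ⁻¹
      = (4 * π) ^ (-(((d:ℝ) + 1) / 2)) * τ ^ (-(((d:ℝ) + 3) / 2)) := by
    rw [← Real.rpow_add (by positivity : (0:ℝ) < 4 * π * τ),
      show -(d:ℝ) / 2 + -(1:ℝ) / 2 = -(((d:ℝ) + 1) / 2) by ring,
      Real.mul_rpow (by positivity : (0:ℝ) ≤ 4 * π) hτ0.le,
      ← Real.rpow_neg_one τ, mul_assoc, ← Real.rpow_add hτ0,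
      show -(((d:ℝ) + 1) / 2) + (-1:ℝ) = -(((d:ℝ) + 3) / 2) by ring]
  rw [e1]
  linear_combination (a * rexp (-‖v‖ ^ 2 / (4 * τ)) * rexp (-a ^ 2 / (4 * τ))) * e2

lemma subord {a : ℝ} (ha : 0 < a) (v : EuclideanSpace ℝ (Fin d)) :
    IntegrableOn (fun τ => heatKer d v τ * (-2 * dHeatKer1 a τ)) (Ioi 0) ∧
    ∫ τ in Ioi (0:ℝ), heatKer d v τ * (-2 * dHeatKer1 a τ) = poissonKer d v a := by
  have hc : (0:ℝ) < (‖v‖ ^ 2 + a ^ 2) / 4 := by positivity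
  have hd0 : (0:ℝ) ≤ (d:ℝ) := Nat.cast_nonneg d
  have hm : (1:ℝ) < ((d:ℝ) + 3) / 2 := by linarith
  have key := dlem_key hc hm
  constructor
  · refine (key.1.const_mul (a * (4 * π) ^ (-(((d:ℝ) + 1) / 2)))).congr
      ((ae_restrict_iff' measurableSet_Ioi).2 (Filter.Eventually.of_forall
        fun τ hτ => (subord_pointwise v hτ).symm))
  · rw [setIntegral_congr_fun measurableSet_Ioi (fun τ hτ => subord_pointwise v hτ),
      integral_const_mul, key.2,
      show ((d:ℝ) + 3) / 2 - 1 = ((d:ℝ) + 1) / 2 by ring]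
    unfold poissonKer
    simp only [neg_div]
    have h4 : (4 * π) ^ (-(((d:ℝ) + 1) / 2)) * ((‖v‖ ^ 2 + a ^ 2) / 4) ^ (-(((d:ℝ) + 1) / 2))
        = π ^ (-(((d:ℝ) + 1) / 2)) * (‖v‖ ^ 2 + a ^ 2) ^ (-(((d:ℝ) + 1) / 2)) := by
      rw [← Real.mul_rpow (by positivity) (by positivity),
        show 4 * π * ((‖v‖ ^ 2 + a ^ 2) / 4) = π * (‖v‖ ^ 2 + a ^ 2) by ring,
        Real.mul_rpow (by positivity) (by positivity)]
    linear_combination a * Real.Gamma (((d:ℝ) + 1) / 2) * h4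

lemma negdH_eq {a τ : ℝ} (hτ0 : 0 < τ) :
    -2 * dHeatKer1 a τ
      = (a * (4 * π) ^ (-((1:ℝ) / 2))) * (τ ^ (-((3:ℝ) / 2)) * rexp (-(a ^ 2 / 4) / τ)) := by
  unfold dHeatKer1 heatKer1
  have e1 : rexp (-(a ^ 2 / 4) / τ) = rexp (-a ^ 2 / (4 * τ)) := by
    congr 1; field_simp
  have e2 : (4 * π * τ) ^ (-(1:ℝ) / 2) * τ⁻¹
      = (4 * π) ^ (-((1:ℝ) / 2)) * τ ^ (-((3:ℝ) / 2)) := by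
    rw [Real.mul_rpow (by positivity : (0:ℝ) ≤ 4 * π) hτ0.le,
      ← Real.rpow_neg_one τ, mul_assoc, ← Real.rpow_add hτ0]
    norm_num
  rw [e1]
  linear_combination (a * rexp (-a ^ 2 / (4 * τ))) * e2

lemma negdH_nonneg {a τ : ℝ} (ha : 0 ≤ a) (hτ0 : 0 < τ) : 0 ≤ -2 * dHeatKer1 a τ := by
  unfold dHeatKer1 heatKer1
  rw [show -2 * (-(a / (2 * τ)) * ((4 * π * τ) ^ (-(1:ℝ) / 2) * rexp (-a ^ 2 / (4 * τ))))
    = (a / τ) * ((4 * π * τ) ^ (-(1:ℝ) / 2) * rexp (-a ^ 2 / (4 * τ))) by ring]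
  exact mul_nonneg (div_nonneg ha hτ0.le)
    (mul_nonneg (Real.rpow_nonneg (mul_nonneg (by positivity) hτ0.le) _) (Real.exp_nonneg _))

lemma heatKer_nonneg (v : EuclideanSpace ℝ (Fin d)) {u : ℝ} (hu : 0 ≤ u) : 0 ≤ heatKer d v u :=
  mul_nonneg (Real.rpow_nonneg (mul_nonneg (by positivity) hu) _) (Real.exp_nonneg _)

lemma heatKer_le {s : ℝ} (hs : 0 < s) (v : EuclideanSpace ℝ (Fin d)) {u : ℝ} (hsu : s ≤ u) :
    heatKer d v u ≤ (4 * π * s) ^ (-(d:ℝ) / 2) := by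
  have hu : (0:ℝ) < u := lt_of_lt_of_le hs hsu
  unfold heatKer
  have h1 : rexp (-‖v‖ ^ 2 / (4 * u)) ≤ 1 := by
    rw [Real.exp_le_one_iff, neg_div]
    exact neg_nonpos.2 (div_nonneg (by positivity) (by linarith))
  have h2 : (4 * π * u) ^ (-(d:ℝ) / 2) ≤ (4 * π * s) ^ (-(d:ℝ) / 2) := by
    refine Real.rpow_le_rpow_of_nonpos (by positivity) (by nlinarith [pi_pos]) ?_
    rw [neg_div]; exact neg_nonpos.2 (by positivity)
  calc (4 * π * u) ^ (-(d:ℝ) / 2) * rexp (-‖v‖ ^ 2 / (4 * u))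
      ≤ (4 * π * u) ^ (-(d:ℝ) / 2) * 1 :=
        mul_le_mul_of_nonneg_left h1 (Real.rpow_nonneg (by positivity) _)
    _ ≤ (4 * π * s) ^ (-(d:ℝ) / 2) := by rw [mul_one]; exact h2

lemma marg_integrable {s a : ℝ} (hs : 0 < s) (ha : 0 < a) (v : EuclideanSpace ℝ (Fin d)) :
    IntegrableOn (fun τ => heatKer d v (s + τ) * (-2 * dHeatKer1 a τ)) (Ioi 0) := by
  have hc : (0:ℝ) < a ^ 2 / 4 := by positivity
  have key := dlem_key hc (by norm_num : (1:ℝ) < 3 / 2)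
  refine Integrable.mono'
    (key.1.const_mul ((4 * π * s) ^ (-(d:ℝ) / 2) * (a * (4 * π) ^ (-((1:ℝ) / 2))))) ?_ ?_
  · apply Measurable.aestronglyMeasurable
    unfold heatKer dHeatKer1 heatKer1
    fun_prop
  · rw [ae_restrict_iff' measurableSet_Ioi]
    refine Filter.Eventually.of_forall (fun τ hτ => ?_)
    have hτ0 : (0:ℝ) < τ := hτ
    have hG : (0:ℝ) ≤ τ ^ (-((3:ℝ) / 2)) * rexp (-(a ^ 2 / 4) / τ) :=
      mul_nonneg (Real.rpow_nonneg hτ0.le _) (Real.exp_nonneg _)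
    rw [Real.norm_of_nonneg (mul_nonneg (heatKer_nonneg v (by linarith))
      (negdH_nonneg ha.le hτ0)), negdH_eq hτ0]
    calc heatKer d v (s + τ)
          * ((a * (4 * π) ^ (-((1:ℝ) / 2))) * (τ ^ (-((3:ℝ) / 2)) * rexp (-(a ^ 2 / 4) / τ)))
        ≤ (4 * π * s) ^ (-(d:ℝ) / 2)
          * ((a * (4 * π) ^ (-((1:ℝ) / 2))) * (τ ^ (-((3:ℝ) / 2)) * rexp (-(a ^ 2 / 4) / τ))) := by
          refine mul_le_mul_of_nonneg_right (heatKer_le hs v (by linarith)) ?_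
          have : (0:ℝ) ≤ a * (4 * π) ^ (-((1:ℝ) / 2)) := by positivity
          exact mul_nonneg this hG
      _ = (4 * π * s) ^ (-(d:ℝ) / 2) * (a * (4 * π) ^ (-((1:ℝ) / 2)))
          * (τ ^ (-((3:ℝ) / 2)) * rexp (-(a ^ 2 / 4) / τ)) := by ring

end Aux

/-- Convolution identity:
K^{δ,k}(x,y,t) = ∫_{ℝ^{N-1}} Γ_{N-1}(x'-z',(k/δ)t) P(z'-y', x_N+t/δ) dz'. -/
theorem Kdk_eq_conv_poisson (δ k : ℝ) (hδ : 0 < δ) (hk : 0 < k) (d : ℕ) (hd : 1 ≤ d)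
    (x' y' : EuclideanSpace ℝ (Fin d)) (xN t : ℝ) (hxN : 0 ≤ xN) (ht : 0 < t) :
    Kdk δ k d x' xN y' t
      = ∫ z' : EuclideanSpace ℝ (Fin d),
          heatKer d (x' - z') ((k / δ) * t) * poissonKer d (z' - y') (xN + t / δ) := by
  set s : ℝ := (k / δ) * t with hs_def
  set a : ℝ := xN + t / δ with ha_def
  have hs : 0 < s := mul_pos (div_pos hk hδ) ht
  have ha : 0 < a := add_pos_of_nonneg_of_pos hxN (div_pos ht hδ)
  set F : ℝ → EuclideanSpace ℝ (Fin d) → ℝ := fun τ z =>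
    heatKer d (x' - z) s * heatKer d (z - y') τ * (-2 * dHeatKer1 a τ) with hF_def
  have hFmeas : AEStronglyMeasurable (Function.uncurry F)
      ((volume.restrict (Ioi 0)).prod volume) := by
    apply Measurable.aestronglyMeasurable
    have : Measurable fun p : ℝ × EuclideanSpace ℝ (Fin d) =>
        heatKer d (x' - p.2) s * heatKer d (p.2 - y') p.1 * (-2 * dHeatKer1 a p.1) := by
      unfold heatKer dHeatKer1 heatKer1
      fun_prop
    exact this
  have hnormint : ∀ τ ∈ Ioi (0:ℝ), ∫ z, ‖F τ z‖
      = heatKer d (x' - y') (s + τ) * (-2 * dHeatKer1 a τ) := by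
    intro τ hτ
    have hτ0 : (0:ℝ) < τ := hτ
    have h1 : ∀ z, ‖F τ z‖ = F τ z := fun z => Real.norm_of_nonneg
      (mul_nonneg (mul_nonneg (heatKer_nonneg _ hs.le) (heatKer_nonneg _ hτ0.le))
        (negdH_nonneg ha.le hτ0))
    rw [integral_congr_ae (Filter.Eventually.of_forall h1)]
    have : ∫ z, F τ z
        = (∫ z, heatKer d (x' - z) s * heatKer d (z - y') τ) * (-2 * dHeatKer1 a τ) := by
      rw [← integral_mul_const]
    rw [this, semigroup_integral hs hτ0]
  have hFint : Integrable (Function.uncurry F) ((volume.restrict (Ioi 0)).prod volume) := by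
    rw [integrable_prod_iff hFmeas]
    constructor
    · refine (ae_restrict_mem measurableSet_Ioi).mono (fun τ hτ => ?_)
      have := (semigroup_integrable hs hτ x' y').mul_const (-2 * dHeatKer1 a τ)
      exact this.congr (Filter.Eventually.of_forall fun z => rfl)
    · refine (marg_integrable hs ha (x' - y')).congr
        ((ae_restrict_mem measurableSet_Ioi).mono (fun τ hτ => ?_))
      exact (hnormint τ hτ).symm
  have swap := integral_integral_swap hFint
  have step1 : Kdk δ k d x' xN y' t = ∫ τ in Ioi (0:ℝ), ∫ z, F τ z := by
    unfold Kdk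
    rw [← integral_const_mul]
    refine setIntegral_congr_fun measurableSet_Ioi (fun τ hτ => ?_)
    have hτ0 : (0:ℝ) < τ := hτ
    have : ∫ z, F τ z
        = (∫ z, heatKer d (x' - z) s * heatKer d (z - y') τ) * (-2 * dHeatKer1 a τ) := by
      rw [← integral_mul_const]
    rw [this, semigroup_integral hs hτ0]
    ring
  have step3 : ∀ z, (∫ τ in Ioi (0:ℝ), F τ z)
      = heatKer d (x' - z) s * poissonKer d (z - y') a := by
    intro z
    have h1 : ∀ τ, F τ z
        = heatKer d (x' - z) s * (heatKer d (z - y') τ * (-2 * dHeatKer1 a τ)) := by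
      intro τ; rw [hF_def]; ring
    rw [setIntegral_congr_fun measurableSet_Ioi (fun τ _ => h1 τ), integral_const_mul,
      (subord ha (z - y')).2]
  rw [step1, swap]
  exact integral_congr_ae (Filter.Eventually.of_forall step3)
end
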